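/- arXiv:2212.06520 — 2 statements merged into one kernel-verified Lean document; each statement's English description precedes it below -/
import Mathlib

section
/- First derivative test: let $a < b$ be reals and let $g : [a,b] \to \mathbb{R}$ be differentiable with $g'$ monotone on $[a,b]$ and $|g'(x)| \geq \lambda > 0$ for all $x \in [a,b]$. Then $\left| \int_a^b e^{2\pi i g(x)}\, dx \right| \leq \frac{1}{\pi \lambda}$. -/
/-!
Write `e(g) = (1 / g') • (g' • e(g))` with `e(t) = exp (2πit)`. By Darboux `g'` has constant
sign, so `1 / g'` is monotone with `|1 / g'| ≤ 1 / λ`, while by the fundamental theorem of calculus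
every integral of `g' • e(g)` over a subinterval equals `(e(g β) - e(g α)) / (2πi)`, of norm at
most `1 / π`. For `ψ = 1 / g'` (up to sign), `F = g' • e(g)` and `L = 1 / λ`, the layer cake
formula `ψ x = ∫₀^L 𝟙[s < ψ x] ds` and Fubini turn `∫ ψ • F` into an integral over `s ∈ (0, L)`
of integrals of `F` over the intervals `{ψ > s}`, which gives the bound `L / π` (a form of the
second mean value theorem).
-/

open Real intervalIntegral

open MeasureTheory Set

theorem Set.OrdConnected.ae_eq_Ioo_csInf_csSup {μ : Measure ℝ} [NullSingletonClass μ] {S : Set ℝ}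
    (hS : S.OrdConnected) (hne : S.Nonempty) (hb : BddBelow S) (ha : BddAbove S) :
    S =ᵐ[μ] Ioo (sInf S) (sSup S) :=
  ((subset_Icc_csInf_csSup hb ha).eventuallyLE.trans Ioo_ae_eq_Icc.symm.le).antisymm
    (IsConnected.Ioo_csInf_csSup_subset ⟨hne, hS.isPreconnected⟩ hb ha).eventuallyLE

section LayerCake

variable {E : Type*} [NormedAddCommGroup E] [NormedSpace ℝ E]

theorem norm_setIntegral_le_of_ordConnected {f : ℝ → E} {a b C : ℝ} (hC₀ : 0 ≤ C)
    (hC : ∀ α ∈ Icc a b, ∀ β ∈ Icc a b, α ≤ β → ‖∫ x in α..β, f x‖ ≤ C)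
    {S : Set ℝ} (hS : S.OrdConnected) (hSab : S ⊆ Icc a b) :
    ‖∫ x in S, f x‖ ≤ C := by
  rcases S.eq_empty_or_nonempty with rfl | hne
  · simpa using hC₀
  have hb : BddBelow S := bddBelow_Icc.mono hSab
  have ha : BddAbove S := bddAbove_Icc.mono hSab
  have hcl : closure S ⊆ Icc a b := closure_minimal hSab isClosed_Icc
  rw [setIntegral_congr_set (hS.ae_eq_Ioo_csInf_csSup hne hb ha), ← integral_Ioc_eq_integral_Ioo,
    ← integral_of_le (csInf_le_csSup hne hb ha)]
  exact hC _ (hcl (csInf_mem_closure hne hb)) _ (hcl (csSup_mem_closure hne ha))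
    (csInf_le_csSup hne hb ha)

theorem norm_setIntegral_smul_le_of_monotone [CompleteSpace E] {ψ : ℝ → ℝ} {f : ℝ → E}
    {a b L C : ℝ} (hψ : Monotone ψ ∨ Antitone ψ) (hL : 0 ≤ L) (hψ₀ : ∀ x ∈ Ioc a b, 0 ≤ ψ x)
    (hψL : ∀ x ∈ Ioc a b, ψ x ≤ L) (hf : IntegrableOn f (Ioc a b))
    (hC : ∀ S ⊆ Ioc a b, S.OrdConnected → ‖∫ x in S, f x‖ ≤ C) :
    ‖∫ x in Ioc a b, ψ x • f x‖ ≤ L * C := by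
  have hψm : Measurable ψ := hψ.elim Monotone.measurable Antitone.measurable
  set K : ℝ × ℝ → E := {p | p.2 < ψ p.1}.indicator (f ·.1)
  have hK : Integrable K ((volume.restrict (Ioc a b)).prod (volume.restrict (Ioo 0 L))) :=
    (hf.comp_fst _).indicator (measurableSet_lt measurable_snd (hψm.comp measurable_fst))
  have hfiber : ∀ x ∈ Ioc a b, ∫ s in Ioo 0 L, K (x, s) = ψ x • f x := by
    intro x hx
    change ∫ s in Ioo 0 L, (Iio (ψ x)).indicator (fun _ ↦ f x) s = _
    rw [setIntegral_indicator measurableSet_Iio, Ioo_inter_Iio, min_eq_right (hψL x hx),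
      setIntegral_const, Real.volume_real_Ioo_of_le (hψ₀ x hx), sub_zero]
  have hslice : ∀ s, ‖∫ x in Ioc a b, K (x, s)‖ ≤ C := by
    intro s
    change ‖∫ x in Ioc a b, (ψ ⁻¹' Ioi s).indicator f x‖ ≤ C
    rw [setIntegral_indicator (hψm measurableSet_Ioi)]
    refine hC _ inter_subset_left (ordConnected_Ioc.inter ?_)
    rcases hψ with hψ | hψ
    · exact ((isUpperSet_Ioi s).preimage hψ).ordConnected
    · exact IsLowerSet.ordConnected fun x y hyx hx ↦ lt_of_lt_of_le hx (hψ hyx)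
  calc ‖∫ x in Ioc a b, ψ x • f x‖
      = ‖∫ s in Ioo 0 L, ∫ x in Ioc a b, K (x, s)‖ := by
        rw [← integral_integral_swap (f := fun x s ↦ K (x, s)) hK,
          setIntegral_congr_fun measurableSet_Ioc hfiber]
    _ ≤ C * volume.real (Ioo 0 L) :=
        norm_setIntegral_le_of_norm_le_const measure_Ioo_lt_top fun s _ ↦ hslice s
    _ = L * C := by rw [Real.volume_real_Ioo_of_le hL, sub_zero, mul_comm]

theorem norm_intervalIntegral_smul_le_of_monotoneOn [CompleteSpace E] {ψ : ℝ → ℝ} {f : ℝ → E}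
    {a b L C : ℝ} (hab : a ≤ b) (hψ : MonotoneOn ψ (Icc a b) ∨ AntitoneOn ψ (Icc a b))
    (hψ₀ : ∀ x ∈ Icc a b, 0 ≤ ψ x) (hψL : ∀ x ∈ Icc a b, ψ x ≤ L)
    (hf : IntervalIntegrable f volume a b)
    (hC : ∀ α ∈ Icc a b, ∀ β ∈ Icc a b, α ≤ β → ‖∫ x in α..β, f x‖ ≤ C) :
    ‖∫ x in a..b, ψ x • f x‖ ≤ L * C := by
  have hbdd : BddBelow (ψ '' Icc a b) := ⟨0, forall_mem_image.2 hψ₀⟩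
  have hbdd' : BddAbove (ψ '' Icc a b) := ⟨L, forall_mem_image.2 hψL⟩
  obtain ⟨φ, hφ, hψφ⟩ : ∃ φ : ℝ → ℝ, (Monotone φ ∨ Antitone φ) ∧ EqOn ψ φ (Icc a b) := by
    rcases hψ with hψ | hψ
    · obtain ⟨φ, hφ, hψφ⟩ := hψ.exists_monotone_extension hbdd hbdd'
      exact ⟨φ, .inl hφ, hψφ⟩
    · obtain ⟨φ, hφ, hψφ⟩ := hψ.exists_antitone_extension hbdd hbdd'
      exact ⟨φ, .inr hφ, hψφ⟩
  have hleft : a ∈ Icc a b := left_mem_Icc.2 hab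
  have hC₀ : 0 ≤ C := by simpa using hC a hleft a hleft le_rfl
  rw [integral_of_le hab, setIntegral_congr_fun measurableSet_Ioc
    fun x hx ↦ by rw [hψφ (Ioc_subset_Icc_self hx)]]
  refine norm_setIntegral_smul_le_of_monotone hφ ((hψ₀ a hleft).trans (hψL a hleft))
    (fun x hx ↦ hψφ (Ioc_subset_Icc_self hx) ▸ hψ₀ x (Ioc_subset_Icc_self hx))
    (fun x hx ↦ hψφ (Ioc_subset_Icc_self hx) ▸ hψL x (Ioc_subset_Icc_self hx))
    ((intervalIntegrable_iff_integrableOn_Ioc_of_le hab).1 hf) fun S hS hSo ↦ ?_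
  exact norm_setIntegral_le_of_ordConnected hC₀ hC hSo (hS.trans Ioc_subset_Icc_self)

theorem norm_intervalIntegral_le_div_of_monotoneOn [CompleteSpace E] {φ : ℝ → ℝ} {f : ℝ → E}
    {a b lam C : ℝ} (hab : a ≤ b) (hlam : 0 < lam)
    (hφ : MonotoneOn φ (Icc a b) ∨ AntitoneOn φ (Icc a b)) (hφlam : ∀ x ∈ Icc a b, lam ≤ φ x)
    (hf : IntervalIntegrable (fun x ↦ φ x • f x) volume a b)
    (hC : ∀ α ∈ Icc a b, ∀ β ∈ Icc a b, α ≤ β → ‖∫ x in α..β, φ x • f x‖ ≤ C) :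
    ‖∫ x in a..b, f x‖ ≤ C / lam := by
  have hφpos : ∀ x ∈ Icc a b, 0 < φ x := fun x hx ↦ hlam.trans_le (hφlam x hx)
  have hψ : MonotoneOn (fun x ↦ (φ x)⁻¹) (Icc a b) ∨ AntitoneOn (fun x ↦ (φ x)⁻¹) (Icc a b) :=
    hφ.symm.imp (fun h x hx y hy hxy ↦ inv_anti₀ (hφpos y hy) (h hx hy hxy))
      (fun h x hx y hy hxy ↦ inv_anti₀ (hφpos x hx) (h hx hy hxy))
  rw [integral_congr fun x hx ↦ (inv_smul_smul₀ (hφpos x (uIcc_of_le hab ▸ hx)).ne' (f x)).symm,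
    div_eq_inv_mul]
  exact norm_intervalIntegral_smul_le_of_monotoneOn hab hψ
    (fun x hx ↦ (inv_pos.2 (hφpos x hx)).le) (fun x hx ↦ inv_anti₀ hlam (hφlam x hx)) hf hC

theorem norm_intervalIntegral_le_div_of_monotoneOn_of_le_abs [CompleteSpace E] {φ : ℝ → ℝ}
    {f : ℝ → E} {a b lam C : ℝ} (hab : a ≤ b) (hlam : 0 < lam)
    (hφ : MonotoneOn φ (Icc a b) ∨ AntitoneOn φ (Icc a b))
    (hsign : (∀ x ∈ Icc a b, φ x < 0) ∨ ∀ x ∈ Icc a b, 0 < φ x)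
    (hφlam : ∀ x ∈ Icc a b, lam ≤ |φ x|)
    (hf : IntervalIntegrable (fun x ↦ φ x • f x) volume a b)
    (hC : ∀ α ∈ Icc a b, ∀ β ∈ Icc a b, α ≤ β → ‖∫ x in α..β, φ x • f x‖ ≤ C) :
    ‖∫ x in a..b, f x‖ ≤ C / lam := by
  rcases hsign with hneg | hpos
  · -- apply the positive case to `-φ` and `-f`, as `(-φ) • (-f) = φ • f`
    have := norm_intervalIntegral_le_div_of_monotoneOn (φ := fun x ↦ -φ x) (f := fun x ↦ -f x)
      hab hlam (hφ.symm.imp AntitoneOn.neg MonotoneOn.neg)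
      (fun x hx ↦ abs_of_neg (hneg x hx) ▸ hφlam x hx) (by simpa only [neg_smul_neg] using hf)
      (by simpa only [neg_smul_neg] using hC)
    rwa [intervalIntegral.integral_neg, norm_neg] at this
  · exact norm_intervalIntegral_le_div_of_monotoneOn hab hlam hφ
      (fun x hx ↦ abs_of_pos (hpos x hx) ▸ hφlam x hx) hf hC

end LayerCake

theorem norm_intervalIntegral_deriv_smul_cexp_le {g g' : ℝ → ℝ} {α β : ℝ}
    (hg : ∀ x ∈ uIcc α β, HasDerivAt g (g' x) x)
    (hint : IntervalIntegrable (fun x ↦ g' x • Complex.exp (2 * π * Complex.I * g x)) volume α β) :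
    ‖∫ x in α..β, g' x • Complex.exp (2 * π * Complex.I * g x)‖ ≤ 1 / π := by
  have hnorm : ∀ t : ℝ,
      ‖Complex.exp (2 * π * Complex.I * t) / (2 * π * Complex.I)‖ = 1 / (2 * π) := by
    intro t
    rw [norm_div, show (2 * π * Complex.I * t : ℂ) = (2 * π * t : ℝ) * Complex.I by push_cast; ring,
      Complex.norm_exp_ofReal_mul_I]
    simp [abs_of_pos pi_pos]
  have hderiv : ∀ x ∈ uIcc α β, HasDerivAt
      (fun y ↦ Complex.exp (2 * π * Complex.I * g y) / (2 * π * Complex.I))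
      (g' x • Complex.exp (2 * π * Complex.I * g x)) x := by
    intro x hx
    refine ((((hg x hx).ofReal_comp.const_mul (2 * π * Complex.I)).cexp).div_const
      (2 * π * Complex.I)).congr_deriv ?_
    rw [Complex.real_smul]
    field_simp
  rw [integral_eq_sub_of_hasDerivAt hderiv hint]
  calc _ ≤ 1 / (2 * π) + 1 / (2 * π) := (norm_sub_le _ _).trans_eq (by rw [hnorm, hnorm])
    _ = 1 / π := by ring

theorem first_derivative_test (a b : ℝ) (hab : a < b) (g g' : ℝ → ℝ) (lam : ℝ)
    (hlam : 0 < lam)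
    (hderiv : ∀ x ∈ Set.Icc a b, HasDerivAt g (g' x) x)
    (hmono : MonotoneOn g' (Set.Icc a b) ∨ AntitoneOn g' (Set.Icc a b))
    (hlow : ∀ x ∈ Set.Icc a b, lam ≤ |g' x|) :
    ‖∫ x in a..b, Complex.exp (2 * Real.pi * Complex.I * (g x))‖
      ≤ 1 / (Real.pi * lam) := by
  have hg'_ne : ∀ x ∈ Icc a b, g' x ≠ 0 := fun x hx h0 ↦ by
    simpa [h0] using hlam.trans_le (hlow x hx)
  have hsign := hasDerivWithinAt_forall_lt_or_forall_gt_of_forall_ne (convex_Icc a b)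
    (fun x hx ↦ (hderiv x hx).hasDerivWithinAt) hg'_ne
  have hg'_int : IntervalIntegrable g' volume a b := by
    rw [← uIcc_of_le hab.le] at hmono
    exact hmono.elim MonotoneOn.intervalIntegrable AntitoneOn.intervalIntegrable
  have hg_cont : ContinuousOn g (uIcc a b) := fun x hx ↦
    (hderiv x (uIcc_of_le hab.le ▸ hx)).continuousAt.continuousWithinAt
  have hint : IntervalIntegrable (fun x ↦ g' x • Complex.exp (2 * π * Complex.I * g x))
      volume a b :=
    hg'_int.smul_continuousOn (Complex.continuous_exp.comp_continuousOn
      ((continuous_const.mul Complex.continuous_ofReal).comp_continuousOn hg_cont))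
  have hpieces : ∀ α ∈ Icc a b, ∀ β ∈ Icc a b, α ≤ β →
      ‖∫ x in α..β, g' x • Complex.exp (2 * π * Complex.I * g x)‖ ≤ 1 / π :=
    fun α hα β hβ _ ↦ norm_intervalIntegral_deriv_smul_cexp_le
      (fun x hx ↦ hderiv x (uIcc_subset_Icc hα hβ hx))
      (hint.mono_set (uIcc_subset_uIcc (uIcc_of_le hab.le ▸ hα) (uIcc_of_le hab.le ▸ hβ)))
  simpa only [div_div] using
    norm_intervalIntegral_le_div_of_monotoneOn_of_le_abs hab.le hlam hmono hsign hlow hint hpieces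
end

section
/- Second derivative test: let $a < b$ be reals and let $g : [a,b] \to \mathbb{R}$ be twice differentiable with $g''(x) \geq \rho > 0$ for all $x \in [a,b]$. Then $\left| \int_a^b e^{2\pi i g(x)}\, dx \right| \leq \frac{4}{\sqrt{\rho}}$. -/
/-!
Van der Corput's argument. Since `g'' ≥ ρ`, the increasing function `g'` stays in `[-√ρ, √ρ]`
only on an interval of length at most `2/√ρ`, where the integrand has modulus `1`. On the two
remaining intervals `|g'| ≥ √ρ`, and integrating by parts against `1/(2πi g')`, which is monotone,
bounds each integral by `3/(2π√ρ) ≤ 1/√ρ` (the first derivative test); the interval where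
`g' ≤ -√ρ` is reduced to the other one by `x ↦ -x`.
-/

open Real intervalIntegral MeasureTheory Set Complex

theorem Set.MapsTo.Icc_of_Ioo {α β : Type*} [LinearOrder α] [TopologicalSpace α] [OrderTopology α]
    [DenselyOrdered α] [TopologicalSpace β] {f : α → β} {c d : α} {t : Set β} (hcd : c < d)
    (hf : ContinuousOn f (Icc c d)) (ht : IsClosed t) (h : MapsTo f (Ioo c d) t) :
    MapsTo f (Icc c d) t := by
  rw [← closure_Ioo hcd.ne] at hf ⊢
  simpa only [ht.closure_eq] using h.closure_of_continuousOn hf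

theorem MonotoneOn.exists_forall_le_forall_lt {α β : Type*} [ConditionallyCompleteLinearOrder α]
    [LinearOrder β] {f : α → β} {a b : α} (hf : MonotoneOn f (Icc a b)) (hab : a ≤ b) (t : β) :
    ∃ u ∈ Icc a b, (∀ x ∈ Ico a u, f x ≤ t) ∧ ∀ x ∈ Ioc u b, t < f x := by
  set S := insert a {x ∈ Icc a b | f x ≤ t}
  have hS : BddAbove S := ⟨b, by rintro x (rfl | ⟨hx, -⟩); exacts [hab, hx.2]⟩
  refine ⟨sSup S, ⟨le_csSup hS (mem_insert a _), csSup_le (insert_nonempty _ _) ?_⟩, ?_, ?_⟩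
  · rintro x (rfl | ⟨hx, -⟩); exacts [hab, hx.2]
  · rintro x ⟨hax, hxu⟩
    obtain ⟨y, hyS, hxy⟩ := exists_lt_of_lt_csSup (insert_nonempty _ _) hxu
    rcases hyS with rfl | ⟨hy, hfy⟩
    · exact absurd hax hxy.not_ge
    · exact (hf ⟨hax, hxy.le.trans hy.2⟩ hy hxy.le).trans hfy
  · rintro x ⟨hux, hxb⟩
    by_contra! hfx
    have hax : a ≤ x := (le_csSup hS (mem_insert a _)).trans hux.le
    exact hux.not_ge (le_csSup hS (Or.inr ⟨⟨hax, hxb⟩, hfx⟩))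

theorem MonotoneOn.exists_split_abs_le {f : ℝ → ℝ} {a b s : ℝ} (hf : MonotoneOn f (Icc a b))
    (hab : a ≤ b) (hs : 0 ≤ s) :
    ∃ u ∈ Icc a b, ∃ v ∈ Icc a b, u ≤ v ∧ (∀ x ∈ Ico a u, f x ≤ -s) ∧
      (∀ x ∈ Ioo u v, |f x| ≤ s) ∧ ∀ x ∈ Ioc v b, s < f x := by
  obtain ⟨u, hu, h_left, h_right_u⟩ := hf.exists_forall_le_forall_lt hab (-s)
  obtain ⟨v, hv, h_left_v, h_right⟩ := hf.exists_forall_le_forall_lt hab s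
  refine ⟨u, hu, v, hv, ?_, h_left, fun x hx => abs_le.2
    ⟨(h_right_u x ⟨hx.1, hx.2.le.trans hv.2⟩).le, h_left_v x ⟨hu.1.trans hx.1.le, hx.2⟩⟩, h_right⟩
  by_contra! hvu
  obtain ⟨x, hvx, hxu⟩ := exists_between hvu
  have := h_left x ⟨hv.1.trans hvx.le, hxu⟩
  have := h_right x ⟨hvx, hxu.le.trans hu.2⟩
  linarith

theorem norm_integral_le_add_add {E : Type*} [NormedAddCommGroup E] [NormedSpace ℝ E]
    {f : ℝ → E} {a b u v : ℝ} (hf : ContinuousOn f (Icc a b)) (hu : u ∈ Icc a b)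
    (hv : v ∈ Icc a b) :
    ‖∫ x in a..b, f x‖ ≤ ‖∫ x in a..u, f x‖ + ‖∫ x in u..v, f x‖ + ‖∫ x in v..b, f x‖ := by
  have hf_int : ∀ p ∈ Icc a b, ∀ q ∈ Icc a b, IntervalIntegrable f volume p q := fun p hp q hq =>
    (hf.mono (uIcc_subset_Icc hp hq)).intervalIntegrable
  have ha : a ∈ Icc a b := left_mem_Icc.2 (hu.1.trans hu.2)
  have hb : b ∈ Icc a b := right_mem_Icc.2 (hu.1.trans hu.2)
  rw [← integral_add_adjacent_intervals (hf_int a ha v hv) (hf_int v hv b hb),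
    ← integral_add_adjacent_intervals (hf_int a ha u hu) (hf_int u hu v hv)]
  exact norm_add₃_le ..

theorem norm_cexp_two_pi_I_mul_ofReal (t : ℝ) : ‖cexp (2 * π * I * t)‖ = 1 := by
  rw [show 2 * π * I * t = ((2 * π * t : ℝ) : ℂ) * I by push_cast; ring]
  exact norm_exp_ofReal_mul_I _

theorem norm_integral_smul_deriv_le {E : Type*} [NormedAddCommGroup E] [NormedSpace ℝ E]
    [CompleteSpace E] {c d : ℝ} {φ φ' : ℝ → ℝ} {v v' : ℝ → E} (hcd : c ≤ d)
    (hφ : ContinuousOn φ (Icc c d)) (hv : ContinuousOn v (Icc c d))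
    (hφφ' : ∀ x ∈ Ioo c d, HasDerivAt φ (φ' x) x) (hφ' : ∀ x ∈ Ioo c d, 0 ≤ φ' x)
    (hvv' : ∀ x ∈ Ioo c d, HasDerivAt v (v' x) x) (hv' : IntervalIntegrable v' volume c d)
    (hv_norm : ∀ x ∈ Icc c d, ‖v x‖ ≤ 1) :
    ‖∫ x in c..d, φ x • v' x‖ ≤ |φ d| + |φ c| + (φ d - φ c) := by
  have hφ'_int : IntervalIntegrable φ' volume c d := by
    rw [← uIcc_of_le hcd] at hφ
    refine intervalIntegrable_deriv_of_nonneg hφ ?_ ?_ <;> rwa [min_eq_left hcd, max_eq_right hcd]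
  have h_end : ∀ x ∈ Icc c d, ‖φ x • v x‖ ≤ |φ x| := fun x hx => by
    simpa [norm_smul] using mul_le_of_le_one_right (abs_nonneg (φ x)) (hv_norm x hx)
  have h_rest : ‖∫ x in c..d, φ' x • v x‖ ≤ φ d - φ c := by
    rw [← integral_eq_sub_of_hasDerivAt_of_le hcd hφ hφφ' hφ'_int]
    refine norm_integral_le_of_norm_le hcd ?_ hφ'_int
    filter_upwards [Measure.ae_ne volume d] with x hxd hx
    have hx' : x ∈ Ioo c d := ⟨hx.1, hx.2.lt_of_ne hxd⟩
    calc ‖φ' x • v x‖ ≤ |φ' x| * 1 := by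
          rw [norm_smul, Real.norm_eq_abs]; gcongr; exact hv_norm x (Ioo_subset_Icc_self hx')
      _ = φ' x := by rw [mul_one, abs_of_nonneg (hφ' x hx')]
  rw [← uIcc_of_le hcd] at hφ hv
  rw [integral_smul_deriv_eq_deriv_smul_of_hasDerivAt hφ hv
    (by rwa [min_eq_left hcd, max_eq_right hcd]) (by rwa [min_eq_left hcd, max_eq_right hcd])
    hφ'_int hv']
  calc _ ≤ ‖φ d • v d‖ + ‖φ c • v c‖ + ‖∫ x in c..d, φ' x • v x‖ :=
        (norm_sub_le _ _).trans (add_le_add_left (norm_sub_le _ _) _)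
    _ ≤ _ := by gcongr; exacts [h_end d ⟨hcd, le_rfl⟩, h_end c ⟨le_rfl, hcd⟩]

theorem norm_integral_cexp_le_of_le_deriv {c d δ : ℝ} {g g' g'' : ℝ → ℝ} (hcd : c ≤ d) (hδ : 0 < δ)
    (hg : ∀ x ∈ Icc c d, HasDerivAt g (g' x) x) (hg' : ∀ x ∈ Icc c d, HasDerivAt g' (g'' x) x)
    (hg'' : ∀ x ∈ Ioo c d, 0 ≤ g'' x) (hδg' : ∀ x ∈ Ioo c d, δ ≤ g' x) :
    ‖∫ x in c..d, cexp (2 * π * I * g x)‖ ≤ 3 / (2 * π * δ) := by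
  rcases hcd.eq_or_lt with rfl | hcd'
  · simp only [integral_same, norm_zero]; positivity
  have hg'_cont : ContinuousOn g' (Icc c d) := fun x hx =>
    (hg' x hx).continuousAt.continuousWithinAt
  have hδg'_Icc : ∀ x ∈ Icc c d, δ ≤ g' x := MapsTo.Icc_of_Ioo hcd' hg'_cont isClosed_Ici hδg'
  have hg'_pos : ∀ x ∈ Icc c d, 0 < 2 * π * g' x := fun x hx =>
    mul_pos two_pi_pos (hδ.trans_le (hδg'_Icc x hx))
  have hg'_ne : ∀ x ∈ Icc c d, 2 * π * g' x ≠ 0 := fun x hx => (hg'_pos x hx).ne'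
  set φ : ℝ → ℝ := fun x => -(2 * π * g' x)⁻¹
  have hφ : ∀ x ∈ Icc c d, HasDerivAt φ (-(-(2 * π * g'' x) / (2 * π * g' x) ^ 2)) x :=
    fun x hx => (((hg' x hx).const_mul (2 * π)).inv (hg'_ne x hx)).neg
  have hv : ∀ x ∈ Icc c d, HasDerivAt (fun x => cexp (2 * π * I * g x))
      (cexp (2 * π * I * g x) * (2 * π * I * g' x)) x :=
    fun x hx => (((hg x hx).ofReal_comp).const_mul (2 * π * I)).cexp
  have h_parts : ∫ x in c..d, cexp (2 * π * I * g x)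
      = I * ∫ x in c..d, φ x • (cexp (2 * π * I * g x) * (2 * π * I * g' x)) := by
    rw [← intervalIntegral.integral_const_mul]
    refine integral_congr fun x hx => ?_
    have : (g' x : ℂ) ≠ 0 := by
      exact_mod_cast (hδ.trans_le (hδg'_Icc x (by rwa [uIcc_of_le hcd] at hx))).ne'
    simp only [φ, real_smul]
    push_cast
    field_simp
    rw [I_sq, neg_neg]
  have hφ_abs : ∀ x ∈ Icc c d, |φ x| ≤ (2 * π * δ)⁻¹ := fun x hx => by
    rw [abs_neg, abs_inv, abs_of_pos (hg'_pos x hx)]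
    gcongr
    exact hδg'_Icc x hx
  have hφ_nonpos : φ d ≤ 0 := by
    simpa only [φ, neg_nonpos] using (inv_pos.2 (hg'_pos d ⟨hcd, le_rfl⟩)).le
  rw [h_parts, norm_mul, norm_I, one_mul]
  refine (norm_integral_smul_deriv_le hcd (fun x hx => (hφ x hx).continuousAt.continuousWithinAt)
    (fun x hx => (hv x hx).continuousAt.continuousWithinAt)
    (fun x hx => hφ x (Ioo_subset_Icc_self hx))
    (fun x hx => ?_) (fun x hx => hv x (Ioo_subset_Icc_self hx)) ?_
    (fun x _ => (norm_cexp_two_pi_I_mul_ofReal (g x)).le)).trans ?_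
  · rw [neg_div, neg_neg]; exact div_nonneg (mul_nonneg two_pi_pos.le (hg'' x hx)) (sq_nonneg _)
  · rw [← uIcc_of_le hcd] at hv hg'_cont
    exact (ContinuousOn.mul (fun x hx => (hv x hx).continuousAt.continuousWithinAt)
      (continuousOn_const.mul (continuous_ofReal.comp_continuousOn hg'_cont))).intervalIntegrable
  · have := hφ_abs c ⟨le_rfl, hcd⟩
    have := hφ_abs d ⟨hcd, le_rfl⟩
    have := neg_abs_le (φ c)
    rw [div_eq_mul_inv 3]
    linarith

theorem norm_integral_cexp_le_of_deriv_le_neg {c d δ : ℝ} {g g' g'' : ℝ → ℝ} (hcd : c ≤ d)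
    (hδ : 0 < δ) (hg : ∀ x ∈ Icc c d, HasDerivAt g (g' x) x)
    (hg' : ∀ x ∈ Icc c d, HasDerivAt g' (g'' x) x) (hg'' : ∀ x ∈ Ioo c d, 0 ≤ g'' x)
    (hδg' : ∀ x ∈ Ioo c d, g' x ≤ -δ) :
    ‖∫ x in c..d, cexp (2 * π * I * g x)‖ ≤ 3 / (2 * π * δ) := by
  have h := norm_integral_cexp_le_of_le_deriv (g := fun x => g (-x)) (g' := fun x => -g' (-x))
    (g'' := fun x => g'' (-x)) (neg_le_neg hcd) hδ
    (fun x hx => by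
      simpa [Function.comp_def] using (hg (-x) (neg_mem_Icc_iff.2 hx)).comp x (hasDerivAt_neg x))
    (fun x hx => by
      simpa [Function.comp_def, Pi.neg_def] using
        ((hg' (-x) (neg_mem_Icc_iff.2 hx)).comp x (hasDerivAt_neg x)).neg)
    (fun x hx => hg'' (-x) (neg_mem_Ioo_iff.2 hx))
    (fun x hx => le_neg.1 (hδg' (-x) (neg_mem_Ioo_iff.2 hx)))
  rwa [integral_comp_neg (fun x => cexp (2 * π * I * g x)), neg_neg, neg_neg] at h

theorem sub_le_of_abs_le_of_le_deriv {f f' : ℝ → ℝ} {u v ρ s : ℝ} (hρ : 0 < ρ) (hs : 0 ≤ s)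
    (hf : ∀ x ∈ Icc u v, HasDerivAt f (f' x) x) (hf' : ∀ x ∈ Ioo u v, ρ ≤ f' x)
    (hfs : ∀ x ∈ Ioo u v, |f x| ≤ s) : v - u ≤ 2 * s / ρ := by
  rcases le_or_gt v u with hvu | huv
  · exact (sub_nonpos.2 hvu).trans (by positivity)
  have hf_cont : ContinuousOn f (Icc u v) := fun x hx => (hf x hx).continuousAt.continuousWithinAt
  have hfs' : MapsTo f (Icc u v) (Icc (-s) s) :=
    MapsTo.Icc_of_Ioo huv hf_cont isClosed_Icc fun x hx => abs_le.1 (hfs x hx)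
  have h_growth := (convex_Icc u v).mul_sub_le_image_sub_of_le_deriv hf_cont
    (fun x hx => (hf x (interior_subset hx)).differentiableAt.differentiableWithinAt)
    (fun x hx => by
      rw [interior_Icc] at hx
      rw [(hf x (Ioo_subset_Icc_self hx)).deriv]; exact hf' x hx)
    u (left_mem_Icc.2 huv.le) v (right_mem_Icc.2 huv.le) huv.le
  rw [le_div_iff₀ hρ]
  linarith [(hfs' (left_mem_Icc.2 huv.le)).1, (hfs' (right_mem_Icc.2 huv.le)).2]

theorem exists_split_of_le_deriv {f f' : ℝ → ℝ} {a b ρ s : ℝ} (hab : a ≤ b) (hρ : 0 < ρ)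
    (hs : 0 ≤ s) (hf : ∀ x ∈ Icc a b, HasDerivAt f (f' x) x) (hf' : ∀ x ∈ Icc a b, ρ ≤ f' x) :
    ∃ u ∈ Icc a b, ∃ v ∈ Icc a b, u ≤ v ∧ v - u ≤ 2 * s / ρ ∧ (∀ x ∈ Ioo a u, f x ≤ -s) ∧
      ∀ x ∈ Ioo v b, s ≤ f x := by
  have hf_mono : MonotoneOn f (Icc a b) :=
    monotoneOn_of_hasDerivWithinAt_nonneg (convex_Icc a b)
      (fun x hx => (hf x hx).continuousAt.continuousWithinAt)
      (fun x hx => (hf x (interior_subset hx)).hasDerivWithinAt)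
      (fun x hx => hρ.le.trans (hf' x (interior_subset hx)))
  obtain ⟨u, hu, v, hv, huv, h_left, h_mid, h_right⟩ := hf_mono.exists_split_abs_le hab hs
  refine ⟨u, hu, v, hv, huv, ?_, fun x hx => h_left x ⟨hx.1.le, hx.2⟩,
    fun x hx => (h_right x ⟨hx.1, hx.2.le⟩).le⟩
  exact sub_le_of_abs_le_of_le_deriv hρ hs (fun x hx => hf x ⟨hu.1.trans hx.1, hx.2.trans hv.2⟩)
    (fun x hx => hf' x ⟨hu.1.trans hx.1.le, hx.2.le.trans hv.2⟩) h_mid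

theorem second_derivative_test (a b : ℝ) (hab : a < b) (g g' g'' : ℝ → ℝ) (ρ : ℝ)
    (hρ : 0 < ρ)
    (hderiv : ∀ x ∈ Set.Icc a b, HasDerivAt g (g' x) x)
    (hderiv2 : ∀ x ∈ Set.Icc a b, HasDerivAt g' (g'' x) x)
    (hlow : ∀ x ∈ Set.Icc a b, ρ ≤ g'' x) :
    ‖∫ x in a..b, Complex.exp (2 * Real.pi * Complex.I * (g x))‖
      ≤ 4 / Real.sqrt ρ := by
  set s := √ρ
  have hs : 0 < s := sqrt_pos.2 hρ
  obtain ⟨u, hu, v, hv, huv, h_gap, h_left, h_right⟩ :=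
    exists_split_of_le_deriv hab.le hρ hs.le hderiv2 hlow
  have h_mid : 2 * s / ρ = 2 / s := by
    rw [← show s * s = ρ from mul_self_sqrt hρ.le]; field_simp
  have h_side : 3 / (2 * π * s) ≤ 1 / s := by
    rw [div_le_div_iff₀ (by positivity) hs]; nlinarith [pi_gt_three]
  have hL : Icc a u ⊆ Icc a b := Icc_subset_Icc_right hu.2
  have hR : Icc v b ⊆ Icc a b := Icc_subset_Icc_left hv.1
  refine (norm_integral_le_add_add (fun x hx =>
    (((hderiv x hx).ofReal_comp).const_mul _).cexp.continuousAt.continuousWithinAt) hu hv).trans ?_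
  calc _ ≤ 3 / (2 * π * s) + 1 * |v - u| + 3 / (2 * π * s) := by
        gcongr
        · exact norm_integral_cexp_le_of_deriv_le_neg hu.1 hs (fun x hx => hderiv x (hL hx))
            (fun x hx => hderiv2 x (hL hx))
            (fun x hx => hρ.le.trans (hlow x (hL (Ioo_subset_Icc_self hx)))) h_left
        · exact norm_integral_le_of_norm_le_const fun x _ => (norm_cexp_two_pi_I_mul_ofReal _).le
        · exact norm_integral_cexp_le_of_le_deriv hv.2 hs (fun x hx => hderiv x (hR hx))
            (fun x hx => hderiv2 x (hR hx))
            (fun x hx => hρ.le.trans (hlow x (hR (Ioo_subset_Icc_self hx)))) h_right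
    _ ≤ 1 / s + 2 / s + 1 / s := by
        rw [one_mul, abs_of_nonneg (sub_nonneg.2 huv), ← h_mid]; gcongr
    _ = 4 / s := by ring
end
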